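/- arXiv:2012.09541 — 2 statements merged into one kernel-verified Lean document; each statement's English description precedes it below -/
import Mathlib

section
/- For every hiring problem (W, M, s, m) and every sequence of hires λ = ⟨q₁,…,q_t⟩ with total quota q = q₁+⋯+q_t ≤ |W|, the set φ^SM(W,λ) selected by the sequential use of minority reserves rule respects minority rights for quota q. -/
open Finset

variable {ι : Type*} [DecidableEq ι]

/-- The (up to) `k` highest-scoring elements of `X`, chosen greedily
(with injective scores this is the set of the `k` highest-scoring elements). -/
noncomputable def topOf (s : ι → ℝ) : ℕ → Finset ι → Finset ι
  | 0, _ => ∅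
  | k + 1, X =>
    if h : X.Nonempty then
      insert (X.exists_max_image s h).choose
        (topOf s k (X.erase (X.exists_max_image s h).choose))
    else ∅

/-- `H` respects minority rights for quota `q` (w.r.t. minorities `M` and ratio `m`):
either `|M| ≥ m·q` and the fraction of minorities in `H` is at least `m`
(stated multiplicatively as `ω(H) ≥ m·|H|`), or `|M| < m·q` and `M ⊆ H`. -/
def RespectsRightsSet (M : Finset ι) (m : ℝ) (q : ℕ) (H : Finset ι) : Prop :=
  (m * (q : ℝ) ≤ (M.card : ℝ) ∧ m * (H.card : ℝ) ≤ ((H ∩ M).card : ℝ)) ∨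
  ((M.card : ℝ) < m * (q : ℝ) ∧ M ⊆ H)

/-- `H` is minority fair (w.r.t. workers `W`, minorities `M`, scores `s`, ratio `m`):
(i) within `M` and within `W ∖ M` selection follows the scores; (ii) no minority with a
higher score is left out while a non-minority is hired; (iii) a lower-scoring minority is
hired over a higher-scoring non-minority only if the minority fraction of `H` is at most
`m` (stated multiplicatively as `ω(H) ≤ m·|H|`). -/
def MinorityFairSet (W M : Finset ι) (s : ι → ℝ) (m : ℝ) (H : Finset ι) : Prop :=
  (∀ w ∈ M, ∀ w' ∈ M, w ∈ H → w' ∉ H → s w' < s w) ∧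
  (∀ w ∈ W \ M, ∀ w' ∈ W \ M, w ∈ H → w' ∉ H → s w' < s w) ∧
  (∀ w ∈ W \ M, ∀ w' ∈ M, s w < s w' → w ∈ H → w' ∈ H) ∧
  ((∃ w ∈ W \ M, ∃ w' ∈ M, s w' < s w ∧ w ∉ H ∧ w' ∈ H) →
    ((H ∩ M).card : ℝ) ≤ m * (H.card : ℝ))

/-- One round of the minority reserves choice from pool `P`: the `min(⌈m·q⌉, |M ∩ P|)`
highest-scoring available minority workers, then the highest-scoring remaining available
workers filling up to `q` hires in total. -/
noncomputable def smRound (M : Finset ι) (s : ι → ℝ) (m : ℝ) (P : Finset ι) (q : ℕ) :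
    Finset ι :=
  let A1 := topOf s (min ⌈m * (q : ℝ)⌉₊ (P ∩ M).card) (P ∩ M)
  A1 ∪ topOf s (q - A1.card) (P \ A1)

/-- The sequential use of minority reserves rule `φ^SM`. -/
noncomputable def phiSM (M : Finset ι) (s : ι → ℝ) (m : ℝ) : Finset ι → List ℕ → Finset ι
  | _, [] => ∅
  | P, q :: rest => smRound M s m P q ∪ phiSM M s m (P \ smRound M s m P q) rest

/-!
Every round `i` hires exactly `min qᵢ |P|` workers, so `φ^SM` hires exactly `q` workers. If
some minority worker is never hired, then she was available in every round, so every round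
filled its full minority reserve `⌈m·qᵢ⌉`; hence `ω(H) ≥ ∑ ⌈m·qᵢ⌉ ≥ m·q = m·|H|`, and in
particular `|M| ≥ m·q`. Otherwise `M ⊆ H`, and both alternatives are immediate.
-/

section TopOf

variable (s : ι → ℝ)

theorem topOf_subset : ∀ (k : ℕ) (X : Finset ι), topOf s k X ⊆ X
  | 0, X => by simp [topOf]
  | k + 1, X => by
    rw [topOf]
    split_ifs with h
    · exact insert_subset (X.exists_max_image s h).choose_spec.1
        ((topOf_subset k _).trans (erase_subset _ _))
    · exact empty_subset X

theorem card_topOf : ∀ (k : ℕ) (X : Finset ι), #(topOf s k X) = min k #X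
  | 0, X => by simp [topOf]
  | k + 1, X => by
    rw [topOf]
    split_ifs with h
    · set x := (X.exists_max_image s h).choose
      have hx : x ∈ X := (X.exists_max_image s h).choose_spec.1
      have hx_notMem : x ∉ topOf s k (X.erase x) :=
        fun hx' => notMem_erase x X (topOf_subset s k _ hx')
      rw [card_insert_of_notMem hx_notMem, card_topOf k, card_erase_of_mem hx]
      have := card_pos.2 h
      omega
    · simp [not_nonempty_iff_eq_empty.1 h]

theorem topOf_eq_self {k : ℕ} {X : Finset ι} (h : #X ≤ k) : topOf s k X = X :=
  eq_of_subset_of_card_le (topOf_subset s k X) (by rw [card_topOf]; omega)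

end TopOf

section SequentialReserves

variable (M : Finset ι) (s : ι → ℝ) {m : ℝ}

theorem smRound_subset (P : Finset ι) (q : ℕ) : smRound M s m P q ⊆ P :=
  union_subset ((topOf_subset _ _ _).trans inter_subset_left)
    ((topOf_subset _ _ _).trans sdiff_subset)

theorem card_smRound (hm1 : m ≤ 1) (P : Finset ι) (q : ℕ) :
    #(smRound M s m P q) = min q #P := by
  unfold smRound
  set A1 := topOf s (min ⌈m * (q : ℝ)⌉₊ #(P ∩ M)) (P ∩ M)
  have hA1P : A1 ⊆ P := (topOf_subset _ _ _).trans inter_subset_left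
  have hceil : ⌈m * (q : ℝ)⌉₊ ≤ q :=
    Nat.ceil_le.2 (mul_le_of_le_one_left (Nat.cast_nonneg q) hm1)
  have hA1q : #A1 ≤ q := by
    have : #A1 ≤ ⌈m * (q : ℝ)⌉₊ := by rw [card_topOf]; omega
    omega
  have hdisj : Disjoint A1 (topOf s (q - #A1) (P \ A1)) :=
    disjoint_of_subset_right (topOf_subset _ _ _) disjoint_sdiff
  rw [card_union_of_disjoint hdisj, card_topOf s _ (P \ A1), card_sdiff_of_subset hA1P]
  have := card_le_card hA1P
  omega

theorem phiSM_subset : ∀ (lam : List ℕ) (P : Finset ι), phiSM M s m P lam ⊆ P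
  | [], P => by simp [phiSM]
  | q :: rest, P =>
    union_subset (smRound_subset M s P q) ((phiSM_subset rest _).trans sdiff_subset)

theorem card_phiSM (hm1 : m ≤ 1) :
    ∀ (lam : List ℕ) (P : Finset ι), #(phiSM M s m P lam) = min lam.sum #P
  | [], P => by simp [phiSM]
  | q :: rest, P => by
    rw [phiSM, List.sum_cons]
    have hdisj : Disjoint (smRound M s m P q) (phiSM M s m (P \ smRound M s m P q) rest) :=
      disjoint_of_subset_right (phiSM_subset M s rest _) disjoint_sdiff
    rw [card_union_of_disjoint hdisj, card_phiSM hm1 rest,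
      card_sdiff_of_subset (smRound_subset M s P q), card_smRound M s hm1]
    omega

theorem nat_ceil_le_card_smRound_inter {P : Finset ι} {q : ℕ} {w : ι}
    (hw : w ∈ (P ∩ M) \ smRound M s m P q) :
    ⌈m * (q : ℝ)⌉₊ ≤ #(smRound M s m P q ∩ M) := by
  set A1 := topOf s (min ⌈m * (q : ℝ)⌉₊ #(P ∩ M)) (P ∩ M)
  have hA1 : A1 ⊆ smRound M s m P q := subset_union_left
  have hlt : ⌈m * (q : ℝ)⌉₊ < #(P ∩ M) := by
    by_contra! hge
    have : A1 = P ∩ M := topOf_eq_self s (by omega)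
    exact (mem_sdiff.1 hw).2 (hA1 (this ▸ (mem_sdiff.1 hw).1))
  calc ⌈m * (q : ℝ)⌉₊ = #A1 := by rw [card_topOf]; omega
    _ ≤ #(smRound M s m P q ∩ M) :=
      card_le_card (subset_inter hA1 ((topOf_subset _ _ _).trans inter_subset_right))

theorem sum_nat_ceil_le_card_phiSM_inter {w : ι} (hwM : w ∈ M) :
    ∀ (lam : List ℕ) (P : Finset ι), w ∈ P \ phiSM M s m P lam →
      (lam.map fun q : ℕ => ⌈m * (q : ℝ)⌉₊).sum ≤ #(phiSM M s m P lam ∩ M)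
  | [], P, _ => by simp [phiSM]
  | q :: rest, P, hw => by
    rw [phiSM, mem_sdiff, mem_union, not_or] at hw
    obtain ⟨hwP, hw_round, hw_rest⟩ := hw
    have h_round := nat_ceil_le_card_smRound_inter M s
      (mem_sdiff.2 ⟨mem_inter.2 ⟨hwP, hwM⟩, hw_round⟩)
    have h_rest := sum_nat_ceil_le_card_phiSM_inter hwM rest _
      (mem_sdiff.2 ⟨mem_sdiff.2 ⟨hwP, hw_round⟩, hw_rest⟩)
    have hdisj : Disjoint (smRound M s m P q ∩ M)
        (phiSM M s m (P \ smRound M s m P q) rest ∩ M) :=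
      (disjoint_of_subset_right (phiSM_subset M s rest _) disjoint_sdiff).mono
        inter_subset_left inter_subset_left
    rw [phiSM, union_inter_distrib_right, card_union_of_disjoint hdisj, List.map_cons,
      List.sum_cons]
    omega

end SequentialReserves

theorem mul_sum_le_sum_nat_ceil (m : ℝ) (lam : List ℕ) :
    m * (lam.sum : ℝ) ≤ ((lam.map fun q : ℕ => ⌈m * (q : ℝ)⌉₊).sum : ℕ) := by
  induction lam with
  | nil => simp
  | cons q rest ih =>
    simp only [List.sum_cons, List.map_cons, Nat.cast_add, mul_add]
    exact add_le_add (Nat.le_ceil _) ih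

theorem phiSM_respects_rights_general (W M : Finset ι) (s : ι → ℝ) (m : ℝ) (lam : List ℕ)
    (hMW : M ⊆ W) (hm1 : m ≤ 1)
    (hsum : lam.sum ≤ W.card) :
    RespectsRightsSet M m lam.sum (phiSM M s m W lam) := by
  set H := phiSM M s m W lam
  have hcard : (#H : ℝ) = lam.sum := by rw [card_phiSM M s hm1, min_eq_left hsum]
  by_cases hMH : M ⊆ H
  · rcases le_or_gt (m * lam.sum) #M with hle | hlt
    · left
      rwa [inter_eq_right.2 hMH, hcard, and_self]
    · exact Or.inr ⟨hlt, hMH⟩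
  · obtain ⟨w, hwM, hwH⟩ := not_subset.1 hMH
    have hω : m * lam.sum ≤ #(H ∩ M) := (mul_sum_le_sum_nat_ceil m lam).trans
      (Nat.cast_le.2 (sum_nat_ceil_le_card_phiSM_inter M s hwM lam W
        (mem_sdiff.2 ⟨hMW hwM, hwH⟩)))
    left
    exact ⟨hω.trans (Nat.cast_le.2 (card_le_card inter_subset_right)), hcard ▸ hω⟩

/-- For every hiring problem `(W, M, s, m)` and every sequence of hires
`λ = ⟨q₁,…,q_t⟩` with total quota `q = q₁+⋯+q_t ≤ |W|`, the set `φ^SM(W,λ)` selected by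
the sequential use of minority reserves rule respects minority rights for quota `q`. -/
theorem phiSM_respects_rights (W M : Finset ι) (s : ι → ℝ) (m : ℝ) (lam : List ℕ)
    (hMW : M ⊆ W) (hs : Set.InjOn s ↑W) (hm0 : 0 ≤ m) (hm1 : m ≤ 1)
    (hsum : lam.sum ≤ W.card) :
    RespectsRightsSet M m lam.sum (phiSM M s m W lam) :=
  phiSM_respects_rights_general W M s m lam hMW hm1 hsum
end

section
/- The sequential use of minority reserves rule is not minority fair: there exist a finite set of workers W, a subset M ⊆ W, an injective score function s, a minority ratio m with 0 ≤ m ≤ 1, and a sequence of hires λ = ⟨q₁,q₂⟩ with q₁+q₂ ≤ |W|, such that the set φ^SM(W,λ) is not minority fair. -/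
open Finset

variable {ι : Type*} [DecidableEq ι]

/-! The counterexample: workers `0 < 1 < 2 < 3` scored by their index, minorities `{0, 3}`,
`m = 1/2` and hires `⟨1, 2⟩`. The first round reserves its single seat for the best minority
`3`; the second reserves one seat for the only remaining minority `0` and fills the other with
`2`. So `0` is hired over the better non-minority `1`, although two thirds of the hires are
minorities, which violates (iii). -/

lemma topOf_zero (s : ι → ℝ) (X : Finset ι) : topOf s 0 X = ∅ := rfl

lemma topOf_one_eq_singleton {s : ι → ℝ} {X : Finset ι} {a : ι} (ha : a ∈ X)
    (hmax : ∀ b ∈ X, b ≠ a → s b < s a) : topOf s 1 X = {a} := by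
  have hX : X.Nonempty := ⟨a, ha⟩
  obtain ⟨hmem, hge⟩ := (X.exists_max_image s hX).choose_spec
  have hchoose : (X.exists_max_image s hX).choose = a := by
    by_contra hne
    exact (hge a ha).not_gt (hmax _ hmem hne)
  rw [topOf, dif_pos hX, hchoose, topOf_zero]
  rfl

lemma smRound_of_reserve_eq_one {M : Finset ι} {s : ι → ℝ} {m : ℝ} {P : Finset ι} {q : ℕ}
    {a : ι} (hreserve : min ⌈m * q⌉₊ (P ∩ M).card = 1) (ha : a ∈ P ∩ M)
    (hmax : ∀ b ∈ P ∩ M, b ≠ a → s b < s a) :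
    smRound M s m P q = insert a (topOf s (q - 1) (P.erase a)) := by
  rw [smRound, hreserve, topOf_one_eq_singleton ha hmax, card_singleton,
    sdiff_singleton_eq_erase, insert_eq]

lemma phiSM_pair (M : Finset ι) (s : ι → ℝ) (m : ℝ) (P : Finset ι) (q₁ q₂ : ℕ) :
    phiSM M s m P [q₁, q₂] =
      smRound M s m P q₁ ∪ smRound M s m (P \ smRound M s m P q₁) q₂ := by
  simp only [phiSM, union_empty]

lemma not_minorityFairSet_of_overrepresented {W M H : Finset ι} {s : ι → ℝ} {m : ℝ} {w w' : ι}
    (hw : w ∈ W \ M) (hw' : w' ∈ M) (hs : s w' < s w) (hwH : w ∉ H) (hw'H : w' ∈ H)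
    (hover : m * H.card < (H ∩ M).card) : ¬ MinorityFairSet W M s m H :=
  fun ⟨_, _, _, hfair⟩ => (hfair ⟨w, hw, w', hw', hs, hwH, hw'H⟩).not_gt hover

/-- The sequential use of minority reserves rule is not minority fair:
there is a hiring problem and a two-round sequence of hires `⟨q₁,q₂⟩` with
`q₁+q₂ ≤ |W|` such that `φ^SM(W,⟨q₁,q₂⟩)` is not minority fair. -/
theorem phiSM_not_minority_fair :
    ∃ (W M : Finset ℕ) (s : ℕ → ℝ) (m : ℝ) (q₁ q₂ : ℕ),
      M ⊆ W ∧ Set.InjOn s ↑W ∧ 0 ≤ m ∧ m ≤ 1 ∧ q₁ + q₂ ≤ W.card ∧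
      ¬ MinorityFairSet W M s m (phiSM M s m W [q₁, q₂]) := by
  refine ⟨{0, 1, 2, 3}, {0, 3}, (↑), 1 / 2, 1, 2, by decide, Nat.cast_injective.injOn,
    by norm_num, by norm_num, by decide, ?_⟩
  have round₁ : smRound {0, 3} (↑) (1 / 2) {0, 1, 2, 3} 1 = {3} := by
    rw [smRound_of_reserve_eq_one (a := 3) (by norm_num [Nat.ceil_eq_iff]) (by decide)
      (by simp), topOf_zero]
    rfl
  have round₂ : smRound {0, 3} (↑) (1 / 2) {0, 1, 2} 2 = {0, 2} := by
    rw [smRound_of_reserve_eq_one (a := 0) (by norm_num [Nat.ceil_eq_iff]) (by decide)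
      (by simp), show ({0, 1, 2} : Finset ℕ).erase 0 = {1, 2} by decide,
      topOf_one_eq_singleton (a := 2) (by decide) (by simp)]
  have hired : phiSM {0, 3} (↑) (1 / 2) {0, 1, 2, 3} [1, 2] = {0, 2, 3} := by
    rw [phiSM_pair, round₁, show ({0, 1, 2, 3} : Finset ℕ) \ {3} = {0, 1, 2} by decide, round₂]
    decide
  rw [hired]
  have minority_share : ({0, 2, 3} ∩ {0, 3} : Finset ℕ).card = 2 := by decide
  exact not_minorityFairSet_of_overrepresented (w := 1) (w' := 0) (by decide) (by decide)
    (by norm_num) (by decide) (by decide) (by norm_num [minority_share])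
end
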